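/- For a non-real quaternion α, the intersection of the centralizer C_α = {β : αβ = βα} with the similarity class [α] = {hαh⁻¹ : h ≠ 0} is exactly {α, ᾱ}. -/

import Mathlib

/-!
Conjugation preserves the real part and the norm, so an element `β` of `C_α ∩ [α]` has
`β.re = α.re` and `‖β.im‖ = ‖α.im‖`. As `β` commutes with `α`, the pure parts `u = α.im` and
`v = β.im` commute, and `u² = -‖u‖² = -‖v‖² = v²`; hence `(u - v)(u + v) = 0` in the division
ring `ℍ`, i.e. `β.im = ±α.im`, which gives `β = α` or `β = ᾱ`. Conversely `ᾱ` commutes with `α`,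
and it is conjugate to `α` by any nonzero pure quaternion orthogonal to `α.im`.
-/

open Quaternion

namespace Quaternion

section CommRing

variable {R : Type*} [CommRing R]

theorem re_mul_comm (a b : ℍ[R]) : (a * b).re = (b * a).re := by
  simp only [re_mul]
  ring

theorem star_eq_re_sub_im (a : ℍ[R]) : star a = a.re - a.im := by
  conv_lhs => rw [← a.re_add_im]
  rw [star_add, star_coe, star_im, sub_eq_add_neg]

theorem normSq_eq_sq_re_add_normSq_im (a : ℍ[R]) : normSq a = a.re ^ 2 + normSq a.im := by
  simp only [normSq_def', re_im, imI_im, imJ_im, imK_im]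
  ring

theorem _root_.Commute.quaternion_im {a b : ℍ[R]} (h : Commute a b) : Commute a.im b.im := by
  rw [← sub_re_self a, ← sub_re_self b]
  exact ((h.sub_right (coe_commute _ a).symm).sub_left
    ((coe_commute _ b).sub_right (coe_commute _ _)))

theorem mul_eq_star_mul_of_orthogonal {h a : ℍ[R]} (hre : h.re = 0)
    (horth : h.imI * a.imI + h.imJ * a.imJ + h.imK * a.imK = 0) : h * a = star a * h := by
  simp only [Quaternion.ext_iff, re_mul, imI_mul, imJ_mul, imK_mul, re_star, imI_star, imJ_star,
    imK_star, hre]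
  exact ⟨by linear_combination -2 * horth, by ring, by ring, by ring⟩

end CommRing

section OrderedField

variable {R : Type*} [Field R] [LinearOrder R] [IsStrictOrderedRing R]

theorem re_conj {h : ℍ[R]} (hh : h ≠ 0) (a : ℍ[R]) : (h * a * h⁻¹).re = a.re := by
  rw [re_mul_comm, ← mul_assoc, inv_mul_cancel₀ hh, one_mul]

theorem normSq_conj {h : ℍ[R]} (hh : h ≠ 0) (a : ℍ[R]) : normSq (h * a * h⁻¹) = normSq a := by
  have : normSq h ≠ 0 := normSq_ne_zero.mpr hh
  rw [map_mul, map_mul, map_inv₀]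
  field_simp

theorem eq_or_eq_star_of_commute {a b : ℍ[R]} (hc : Commute a b) (hre : b.re = a.re)
    (hn : normSq b = normSq a) : b = a ∨ b = star a := by
  have him : normSq b.im = normSq a.im := by
    have ha := normSq_eq_sq_re_add_normSq_im a
    have hb := normSq_eq_sq_re_add_normSq_im b
    rw [hre] at hb
    linear_combination ha - hb + hn
  have hsq : b.im * b.im = a.im * a.im := by
    rw [← sq, ← sq, im_sq, im_sq, him]
  rw [← b.re_add_im, hre]
  rcases hc.quaternion_im.symm.mul_self_eq_mul_self_iff.mp hsq with h | h
  · exact Or.inl (by rw [h, a.re_add_im])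
  · exact Or.inr (by rw [h, star_eq_re_sub_im, sub_eq_add_neg])

theorem exists_ne_zero_mul_eq_star_mul (a : ℍ[R]) : ∃ h : ℍ[R], h ≠ 0 ∧ h * a = star a * h := by
  by_cases hIJ : a.imI = 0 ∧ a.imJ = 0
  · refine ⟨⟨0, 1, 0, 0⟩, fun h0 => by simpa using congrArg QuaternionAlgebra.imI h0, ?_⟩
    exact mul_eq_star_mul_of_orthogonal rfl (by simp [hIJ.1])
  · refine ⟨⟨0, -a.imJ, a.imI, 0⟩, fun h0 => hIJ ?_, mul_eq_star_mul_of_orthogonal rfl ?_⟩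
    · have hI := congrArg QuaternionAlgebra.imI h0
      have hJ := congrArg QuaternionAlgebra.imJ h0
      exact ⟨by simpa using hJ, by simpa using hI⟩
    · simp only [zero_mul, add_zero]
      ring

theorem exists_star_eq_conj (a : ℍ[R]) : ∃ h : ℍ[R], h ≠ 0 ∧ star a = h * a * h⁻¹ := by
  obtain ⟨h, hh, hmul⟩ := exists_ne_zero_mul_eq_star_mul a
  exact ⟨h, hh, by rw [hmul, mul_inv_cancel_right₀ hh]⟩

end OrderedField

end Quaternion

theorem centralizer_inter_similarity_general (α : Quaternion ℝ) :
    {β : Quaternion ℝ | α * β = β * α} ∩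
        {β : Quaternion ℝ | ∃ h : Quaternion ℝ, h ≠ 0 ∧ β = h * α * h⁻¹} =
      {α, star α} := by
  ext β
  simp only [Set.mem_inter_iff, Set.mem_ofPred_eq, Set.mem_insert_iff, Set.mem_singleton_iff]
  constructor
  · rintro ⟨hc, h, hh, rfl⟩
    exact eq_or_eq_star_of_commute hc (re_conj hh α) (normSq_conj hh α)
  · rintro (rfl | rfl)
    · exact ⟨rfl, 1, one_ne_zero, by simp⟩
    · exact ⟨by rw [self_mul_star, star_mul_self], exists_star_eq_conj α⟩

/-- For a non-real quaternion α, C_α ∩ [α] = {α, ᾱ}. -/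
theorem centralizer_inter_similarity (α : Quaternion ℝ) (hα : α.im ≠ 0) :
    {β : Quaternion ℝ | α * β = β * α} ∩
        {β : Quaternion ℝ | ∃ h : Quaternion ℝ, h ≠ 0 ∧ β = h * α * h⁻¹} =
      {α, star α} :=
  centralizer_inter_similarity_general α
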